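/- Let S be a consistent queryless schedule and T a basic input tree of S. Then S[T] is defined, the edge set of S[T] equals (E(T) ∪ ADD(S)) − DEL(S), and S[T] is a basic output tree of S. -/

import Mathlib

attribute [local instance] Classical.propDecidable

/-! ## Data model: nodes, labels, edges, document trees -/

abbrev Node := ℕ
abbrev Label := ℕ
abbrev Edge := Node × Label × Node

/-- A candidate document tree: a finite node set, a finite edge set, a root. -/
structure Tree3 where
  N : Finset Node
  E : Finset Edge
  root : Node

/-- The edge-step relation of a set of labelled edges. -/
def estep (E : Set Edge) (a b : Node) : Prop := ∃ l : Label, (a, l, b) ∈ E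

/-- `T` is a document tree: the root is a node, edges connect nodes, every node has at
most one incoming edge, the root has none, and every node is reachable from the root
(edges are directed from parent to child). -/
def IsDT (T : Tree3) : Prop :=
  T.root ∈ T.N ∧
  (∀ e ∈ T.E, e.1 ∈ T.N ∧ e.2.2 ∈ T.N) ∧
  (∀ e ∈ T.E, ∀ e' ∈ T.E, e.2.2 = e'.2.2 → e = e') ∧
  (∀ e ∈ T.E, e.2.2 ≠ T.root) ∧
  (∀ n ∈ T.N, Relation.ReflTransGen (estep (↑T.E)) T.root n)

/-! ## Update operations and queryless schedules -/

inductive Op where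
  | add : Node → Label → Node → Op
  | del : Node → Label → Node → Op
deriving DecidableEq

/-- Apply an update operation to a tree; `none` when the operation is undefined. -/
noncomputable def applyOp (o : Op) (T : Tree3) : Option Tree3 :=
  match o with
  | Op.add m l n =>
      let T' : Tree3 := ⟨insert n T.N, insert (m, l, n) T.E, T.root⟩
      if (m, l, n) ∈ T.E ∨ ¬ IsDT T' then none else some T'
  | Op.del m l n =>
      let T' : Tree3 := ⟨T.N.erase n, T.E.erase (m, l, n), T.root⟩
      if (m, l, n) ∉ T.E ∨ ¬ IsDT T' then none else some T'

/-- An action is an operation tagged with a transaction identifier. -/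
abbrev QLAction := Op × ℕ

/-- A queryless (QL) schedule is a finite sequence of actions. -/
abbrev QLSchedule := List QLAction

/-- Apply a QL schedule to a tree, operation by operation. -/
noncomputable def applyQL : QLSchedule → Tree3 → Option Tree3
  | [], T => some T
  | a :: rest, T => (applyOp a.1 T).bind (applyQL rest)

/-- `S[T]` is defined (and `T` is a document tree). -/
def DefinedOn (S : QLSchedule) (T : Tree3) : Prop := IsDT T ∧ (applyQL S T).isSome

/-- A QL schedule is consistent iff it is defined on at least one document tree. -/
def ConsistentQL (S : QLSchedule) : Prop := ∃ T, DefinedOn S T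

def Op.src : Op → Node
  | Op.add m _ _ => m
  | Op.del m _ _ => m

def Op.tgt : Op → Node
  | Op.add _ _ n => n
  | Op.del _ _ n => n

def Op.edge : Op → Edge
  | Op.add m l n => (m, l, n)
  | Op.del m l n => (m, l, n)

/-- The list of operations of a QL schedule. -/
def ops (S : QLSchedule) : List Op := S.map Prod.fst

/-- The operation containing the first occurrence of the node `x` in `S`, if any. -/
def firstNodeOp (S : QLSchedule) (x : Node) : Option Op :=
  (ops S).find? (fun o => (o.src == x) || (o.tgt == x))

/-- The operation containing the last occurrence of the node `x` in `S`, if any. -/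
def lastNodeOp (S : QLSchedule) (x : Node) : Option Op :=
  (ops S).reverse.find? (fun o => (o.src == x) || (o.tgt == x))

/-- The operation containing the first occurrence of the edge `e` in `S`, if any. -/
def firstEdgeOp (S : QLSchedule) (e : Edge) : Option Op :=
  (ops S).find? (fun o => o.edge == e)

/-- The operation containing the last occurrence of the edge `e` in `S`, if any. -/
def lastEdgeOp (S : QLSchedule) (e : Edge) : Option Op :=
  (ops S).reverse.find? (fun o => o.edge == e)

/-- Some edge with target `x` occurs in `S`. -/
def occursTgt (S : QLSchedule) (x : Node) : Prop := ∃ o ∈ ops S, o.tgt = x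

/-- `N^min_I(S)`. -/
def NminI (S : QLSchedule) : Set Node :=
  {x | ∃ l n, firstNodeOp S x = some (Op.add x l n)} ∪
  {x | ∃ l n, firstNodeOp S x = some (Op.del x l n)} ∪
  {x | ∃ m l, firstNodeOp S x = some (Op.del m l x)}

/-- `N^max_I(S)`. -/
def NmaxI (S : QLSchedule) : Set Node :=
  {x | ¬ ∃ m l, firstNodeOp S x = some (Op.add m l x)}

/-- `E^min_I(S)`. -/
def EminI (S : QLSchedule) : Set Edge :=
  {e | firstEdgeOp S e = some (Op.del e.1 e.2.1 e.2.2)}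

/-- `E^max_I(S)`. -/
def EmaxI (S : QLSchedule) : Set Edge :=
  EminI S ∪ {e | ¬ occursTgt S e.1 ∧ ¬ occursTgt S e.2.2}

/-- `N^min_O(S)`. -/
def NminO (S : QLSchedule) : Set Node :=
  {x | ∃ l n, lastNodeOp S x = some (Op.del x l n)} ∪
  {x | ∃ l n, lastNodeOp S x = some (Op.add x l n)} ∪
  {x | ∃ m l, lastNodeOp S x = some (Op.add m l x)}

/-- `N^max_O(S)`. -/
def NmaxO (S : QLSchedule) : Set Node :=
  {x | ¬ ∃ m l, lastNodeOp S x = some (Op.del m l x)}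

/-- `E^min_O(S)`. -/
def EminO (S : QLSchedule) : Set Edge :=
  {e | lastEdgeOp S e = some (Op.add e.1 e.2.1 e.2.2)}

/-- `E^max_O(S)`. -/
def EmaxO (S : QLSchedule) : Set Edge :=
  EminO S ∪ {e | ¬ occursTgt S e.1 ∧ ¬ occursTgt S e.2.2}

/-- `ADD(S)`: edges whose last occurrence in `S` is an addition. -/
def ADDs (S : QLSchedule) : Set Edge :=
  {e | lastEdgeOp S e = some (Op.add e.1 e.2.1 e.2.2)}

/-- `DEL(S)`: edges whose last occurrence in `S` is a deletion. -/
def DELs (S : QLSchedule) : Set Edge :=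
  {e | lastEdgeOp S e = some (Op.del e.1 e.2.1 e.2.2)}

/-- `T` is a basic input tree of `S`. -/
def BasicInput (S : QLSchedule) (T : Tree3) : Prop :=
  IsDT T ∧ NminI S ⊆ ↑T.N ∧ ↑T.N ⊆ NmaxI S ∧ EminI S ⊆ ↑T.E ∧ ↑T.E ⊆ EmaxI S

/-- `T` is a basic output tree of `S`. -/
def BasicOutput (S : QLSchedule) (T : Tree3) : Prop :=
  IsDT T ∧ NminO S ⊆ ↑T.N ∧ ↑T.N ⊆ NmaxO S ∧ EminO S ⊆ ↑T.E ∧ ↑T.E ⊆ EmaxO S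

/-- The C-condition (nine clauses). -/
def CCond (S : QLSchedule) : Prop :=
  (∀ i j (n l₁ n₁ n₂ l₂ : ℕ), i < j →
      (ops S)[i]? = some (Op.add n l₁ n₁) → (ops S)[j]? = some (Op.add n₂ l₂ n) →
      ∃ k : ℕ, i < k ∧ k < j ∧ (ops S)[k]? = some (Op.del n l₁ n₁)) ∧
  (∀ i j (n₁ l₁ n n₂ l₂ : ℕ), i < j →
      (ops S)[i]? = some (Op.add n₁ l₁ n) → (ops S)[j]? = some (Op.add n₂ l₂ n) →
      ∃ k : ℕ, i < k ∧ k < j ∧ (ops S)[k]? = some (Op.del n₁ l₁ n)) ∧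
  (∀ i j (n l₁ n₁ n₂ l₂ : ℕ), i < j →
      (ops S)[i]? = some (Op.add n l₁ n₁) → (ops S)[j]? = some (Op.del n₂ l₂ n) →
      ∃ k : ℕ, i < k ∧ k < j ∧ (ops S)[k]? = some (Op.del n l₁ n₁)) ∧
  (∀ i j (n₁ l₁ n l₂ n₂ : ℕ), i < j →
      (ops S)[i]? = some (Op.add n₁ l₁ n) → (ops S)[j]? = some (Op.del n l₂ n₂) →
      ∃ k : ℕ, i < k ∧ k < j ∧ (ops S)[k]? = some (Op.add n l₂ n₂)) ∧
  (∀ i j (n₁ l₁ n n₂ l₂ : ℕ), i < j → (n₁, l₁) ≠ (n₂, l₂) →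
      (ops S)[i]? = some (Op.add n₁ l₁ n) → (ops S)[j]? = some (Op.del n₂ l₂ n) →
      ∃ k : ℕ, i < k ∧ k < j ∧ (ops S)[k]? = some (Op.del n₁ l₁ n)) ∧
  (∀ i j (n l₁ n₁ n₂ l₂ : ℕ), i < j →
      (ops S)[i]? = some (Op.del n l₁ n₁) → (ops S)[j]? = some (Op.add n₂ l₂ n) →
      ∃ k : ℕ, ∃ n₃ l₃ : ℕ, i < k ∧ k < j ∧ (ops S)[k]? = some (Op.del n₃ l₃ n)) ∧
  (∀ i j (n₁ l₁ n l₂ n₂ : ℕ), i < j →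
      (ops S)[i]? = some (Op.del n₁ l₁ n) → (ops S)[j]? = some (Op.add n l₂ n₂) →
      ∃ k : ℕ, ∃ n₃ l₃ : ℕ, i < k ∧ k < j ∧ (ops S)[k]? = some (Op.add n₃ l₃ n)) ∧
  (∀ i j (n₁ l₁ n l₂ n₂ : ℕ), i < j →
      (ops S)[i]? = some (Op.del n₁ l₁ n) → (ops S)[j]? = some (Op.del n l₂ n₂) →
      ∃ k : ℕ, ∃ n₃ l₃ : ℕ, i < k ∧ k < j ∧ (ops S)[k]? = some (Op.add n₃ l₃ n)) ∧
  (∀ i j (n₁ l₁ n n₂ l₂ : ℕ), i < j →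
      (ops S)[i]? = some (Op.del n₁ l₁ n) → (ops S)[j]? = some (Op.del n₂ l₂ n) →
      ∃ k : ℕ, i < k ∧ k < j ∧ (ops S)[k]? = some (Op.add n₂ l₂ n))

/-! ## Transactions, equivalence and serializability of QL schedules -/

/-- Two QL schedules are interleavings of the same set of transactions: for every
transaction identifier, the subsequences of actions with that identifier coincide. -/
def SameTrans (S S' : QLSchedule) : Prop :=
  ∀ t : ℕ, S.filter (fun a => a.2 == t) = S'.filter (fun a => a.2 == t)

/-- A schedule is serial iff the actions of each transaction occur consecutively. -/
def Serial (S : QLSchedule) : Prop :=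
  ∀ i j k : ℕ, i ≤ j → j ≤ k →
    ∀ a b c : QLAction, S[i]? = some a → S[j]? = some b → S[k]? = some c →
      a.2 = c.2 → b.2 = a.2

/-- Two QL schedules are equivalent: they are defined on the same non-empty set of
document trees and produce the same output tree on each of them. -/
def EquivQL (S S' : QLSchedule) : Prop :=
  (∃ T, DefinedOn S T) ∧ ∀ T, IsDT T → applyQL S T = applyQL S' T

/-- A QL schedule is serializable iff it is equivalent to a serial schedule over the
same set of transactions. -/
def SerializableQL (S : QLSchedule) : Prop :=
  ∃ S', Serial S' ∧ SameTrans S S' ∧ EquivQL S S'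

/-! ## Paths and forests -/

/-- `SPath G m lp n`: there is a directed path from `m` to `n` in the edge set `G`
whose label path is `lp`. -/
inductive SPath (G : Set Edge) : Node → List Label → Node → Prop where
  | nil (n : Node) : SPath G n [] n
  | cons {m n n' : Node} {l : Label} {lp : List Label} :
      (m, l, n) ∈ G → SPath G n lp n' → SPath G m (l :: lp) n'

/-- A set of edges is a forest: no two distinct edges share a target, and
there is no (non-trivial) directed cycle. -/
def IsForest (G : Set Edge) : Prop :=
  (∀ e ∈ G, ∀ e' ∈ G, e.2.2 = e'.2.2 → e = e') ∧
  ¬ ∃ (n : Node) (lp : List Label), lp ≠ [] ∧ SPath G n lp n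

/-! ## Path expressions -/

inductive Step where
  | star : Step
  | lab : Label → Step
deriving DecidableEq

/-- Path expressions: `ε`, `pe/f` and `pe//f` (a single step `f` is `ε/f`). -/
inductive PathExpr where
  | eps : PathExpr
  | child : PathExpr → Step → PathExpr
  | desc : PathExpr → Step → PathExpr
deriving DecidableEq

def Step.mtch : Step → Label → Prop
  | Step.star, _ => True
  | Step.lab l, l' => l = l'

def Step.mtchB : Step → Label → Bool
  | Step.star, _ => true
  | Step.lab l, l' => l == l'

/-- The set `L(pe)` of label paths represented by a path expression
(a label path is a list of labels). -/
def PathExpr.lang : PathExpr → Set (List Label)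
  | PathExpr.eps => {[]}
  | PathExpr.child pe f => {w | ∃ u l, u ∈ pe.lang ∧ f.mtch l ∧ w = u ++ [l]}
  | PathExpr.desc pe f => {w | ∃ u v l, u ∈ pe.lang ∧ f.mtch l ∧ w = u ++ v ++ [l]}

/-- `SOP` on a *reversed* label path. -/
def SOPr : PathExpr → List Label → Set PathExpr
  | pe, [] => {pe}
  | PathExpr.eps, _ :: _ => ∅
  | PathExpr.child pe f, l :: lp => if f.mtchB l then SOPr pe lp else ∅
  | PathExpr.desc pe f, l :: lp =>
      if f.mtchB l then SOPr pe lp ∪ SOPr (PathExpr.desc pe Step.star) lp else ∅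
termination_by pe lp => lp.length

/-- `SOP(pe)_lp`: the set of non-empty `lp`-prefixes of `pe`. -/
def SOP (pe : PathExpr) (lp : List Label) : Set PathExpr := SOPr pe lp.reverse

/-- `L(SOP(pe)_lp)`. -/
def LSOP (pe : PathExpr) (lp : List Label) : Set (List Label) :=
  ⋃ pe' ∈ SOP pe lp, pe'.lang

/-- `pe/lp`: append a label path to a path expression with `/` separators. -/
def PathExpr.appendLP : PathExpr → List Label → PathExpr
  | pe, [] => pe
  | pe, l :: lp => PathExpr.appendLP (PathExpr.child pe (Step.lab l)) lp

/-- The prefixes of a path expression (including `ε`). -/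
def PathExpr.prefixes : PathExpr → Set PathExpr
  | PathExpr.eps => {PathExpr.eps}
  | PathExpr.child pe f => insert (PathExpr.child pe f) pe.prefixes
  | PathExpr.desc pe f => insert (PathExpr.desc pe f) pe.prefixes

/-! ## Schedules with queries -/

inductive GOp where
  | query : Node → PathExpr → GOp
  | add : Node → Label → Node → GOp
  | del : Node → Label → Node → GOp

abbrev GAction := GOp × ℕ

/-- A (general) schedule is a finite sequence of query/add/del actions. -/
abbrev Schedule := List GAction

def GOp.toOp? : GOp → Option Op
  | GOp.query _ _ => none
  | GOp.add m l n => some (Op.add m l n)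
  | GOp.del m l n => some (Op.del m l n)

/-- The QL schedule of a schedule: remove all query actions. -/
def qlOf (S : Schedule) : QLSchedule :=
  S.filterMap (fun a => (a.1.toOp?).map (fun o => (o, a.2)))

/-- The answer of `query(n,pe)` on a tree `T`. -/
def queryAnswer (n : Node) (pe : PathExpr) (T : Tree3) : Set Node :=
  {n' | n' ∈ T.N ∧ ∃ lp, SPath (↑T.E) n lp n' ∧ lp ∈ pe.lang}

/-- A schedule is consistent iff its QL schedule is. -/
def ConsistentSched (S : Schedule) : Prop := ConsistentQL (qlOf S)

/-- Run a schedule on a tree: the final tree together with, for each query (in order),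
its transaction identifier and its answer; `none` if some update is undefined. -/
noncomputable def runQ : Schedule → Tree3 → Option (Tree3 × List (ℕ × Set Node))
  | [], T => some (T, [])
  | (GOp.query n pe, t) :: rest, T =>
      (runQ rest T).map (fun p => (p.1, (t, queryAnswer n pe T) :: p.2))
  | (GOp.add m l n, _) :: rest, T =>
      (applyOp (Op.add m l n) T).bind (runQ rest)
  | (GOp.del m l n, _) :: rest, T =>
      (applyOp (Op.del m l n) T).bind (runQ rest)

/-- Two schedules are equivalent: defined on the same non-empty set of document trees,
and on each such tree they produce the same output tree and, per transaction, the same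
sequence of query answers. -/
def EquivSched (S₁ S₂ : Schedule) : Prop :=
  (∃ T, IsDT T ∧ (runQ S₁ T).isSome) ∧
  ∀ T, IsDT T →
    ((runQ S₁ T).isSome ↔ (runQ S₂ T).isSome) ∧
    ∀ p₁ p₂, runQ S₁ T = some p₁ → runQ S₂ T = some p₂ →
      p₁.1 = p₂.1 ∧
      ∀ t : ℕ, (p₁.2.filter (fun x => x.1 == t)).map Prod.snd
             = (p₂.2.filter (fun x => x.1 == t)).map Prod.snd

/-- Two schedules are interleavings of the same set of transactions. -/
def SameTransG (S S' : Schedule) : Prop :=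
  ∀ t : ℕ, S.filter (fun a => a.2 == t) = S'.filter (fun a => a.2 == t)

/-- A schedule is serial iff the actions of each transaction occur consecutively. -/
def SerialG (S : Schedule) : Prop :=
  ∀ i j k : ℕ, i ≤ j → j ≤ k →
    ∀ a b c : GAction, S[i]? = some a → S[j]? = some b → S[k]? = some c →
      a.2 = c.2 → b.2 = a.2

/-- A schedule is serializable iff it is equivalent to a serial schedule over the same
set of transactions. -/
def SerializableSched (S : Schedule) : Prop :=
  ∃ S', SerialG S' ∧ SameTransG S S' ∧ EquivSched S S'

/-- `E^min(S^Q)` where `Q` is the action at position `i` of `S`. -/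
def EminSQ (S : Schedule) (i : ℕ) : Set Edge :=
  (EminI (qlOf S) \ DELs (qlOf (S.take i))) ∪ ADDs (qlOf (S.take i))

/-- `E^max(S^Q)` where `Q` is the action at position `i` of `S`. -/
def EmaxSQ (S : Schedule) (i : ℕ) : Set Edge :=
  (EmaxI (qlOf S) \ DELs (qlOf (S.take i))) ∪ ADDs (qlOf (S.take i))

/-- `x` is a non-building-node of `S`: some `add(m,l,x)` or `del(m,l,x)` occurs in `S`. -/
def NonBuilding (S : Schedule) (x : Node) : Prop :=
  ∃ a ∈ S, ∃ m l, a.1 = GOp.add m l x ∨ a.1 = GOp.del m l x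

/-- `x` is a node of the graph (edge set) `G`. -/
def NodeOfGraph (G : Set Edge) (x : Node) : Prop := ∃ e ∈ G, e.1 = x ∨ e.2.2 = x

/-- `x` has a parent in the edge set `G`. -/
def HasParent (G : Set Edge) (x : Node) : Prop := ∃ e ∈ G, e.2.2 = x

/-- `PQRN(S,Q)` for the query `Q = query(n,pe)` at position `i` of `S`:
the nodes `m` of the graph `E^min(S^Q)` that are non-building-nodes, whose root
ancestor `r` in the forest `E^min(S^Q)` (the node with no parent from which `m` is
reachable, via the label path `ALabel(S^Q,m)`) is a building-node different from `n`,
and such that `L(SOP(pe)_{ALabel(S^Q,m)}) ≠ ∅`. -/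
def PQRN (S : Schedule) (i : ℕ) (n : Node) (pe : PathExpr) : Set Node :=
  {m | NodeOfGraph (EminSQ S i) m ∧ NonBuilding S m ∧
       ∃ r lp, SPath (EminSQ S i) r lp m ∧ ¬ HasParent (EminSQ S i) r ∧
         ¬ NonBuilding S r ∧ r ≠ n ∧ LSOP pe lp ≠ ∅}

/-- The answer of the query at position `i` of `S` when `S` is applied to `T`
(the query is evaluated on the tree obtained by applying the actions before it). -/
noncomputable def answerAt (S : Schedule) (i : ℕ) (T : Tree3) : Option (Set Node) :=
  match S[i]? with
  | some (GOp.query n pe, _) => (applyQL (qlOf (S.take i)) T).map (queryAnswer n pe)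
  | _ => none

/-!
Consistency of `S` is witnessed by some document tree `T₀`; every tree on which a schedule is
defined is a basic input tree of it. By induction along `S = a :: S'`: a basic input tree `T`
of `S` admits `a`, and `a` turns it into a basic input tree of `S'`. The conditions on `S'` this
needs (the nodes and the edge produced by `a` are allowed in an input of `S'`, those destroyed
by `a` are not required) hold because they hold in the basic input tree `a[T₀]` of `S'`.

The edge set of `S[T]` is read off edge by edge from the last operation on that edge. For the
output, operations are invertible, and reversing `S` while swapping `add` and `del` exchanges
first and last occurrences: the basic output trees of `S` are the basic input trees of this
inverse schedule, which is defined on `S[T]`.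
-/

@[simps]
def Tree3.insertEdge (T : Tree3) (m l n : Node) : Tree3 :=
  ⟨insert n T.N, insert (m, l, n) T.E, T.root⟩

@[simps]
def Tree3.eraseEdge (T : Tree3) (m l n : Node) : Tree3 :=
  ⟨T.N.erase n, T.E.erase (m, l, n), T.root⟩

lemma applyOp_add (m l n : Node) (T : Tree3) : applyOp (Op.add m l n) T =
    if (m, l, n) ∈ T.E ∨ ¬ IsDT (T.insertEdge m l n) then none
    else some (T.insertEdge m l n) := rfl

lemma applyOp_del (m l n : Node) (T : Tree3) : applyOp (Op.del m l n) T =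
    if (m, l, n) ∉ T.E ∨ ¬ IsDT (T.eraseEdge m l n) then none
    else some (T.eraseEdge m l n) := rfl

namespace IsDT

variable {T : Tree3} {m l n : Node}

lemma src_mem (hT : IsDT T) {e : Edge} (h : e ∈ T.E) : e.1 ∈ T.N := (hT.2.1 _ h).1

lemma tgt_mem (hT : IsDT T) {e : Edge} (h : e ∈ T.E) : e.2.2 ∈ T.N := (hT.2.1 _ h).2

lemma tgt_ne_root (hT : IsDT T) (h : (m, l, n) ∈ T.E) : n ≠ T.root := hT.2.2.2.1 _ h

lemma eq_of_tgt_eq (hT : IsDT T) {e e' : Edge} (h : e ∈ T.E) (h' : e' ∈ T.E)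
    (htgt : e.2.2 = e'.2.2) : e = e' :=
  hT.2.2.1 _ h _ h' htgt

lemma exists_parent (hT : IsDT T) (hn : n ∈ T.N) (hroot : n ≠ T.root) :
    ∃ m l, (m, l, n) ∈ T.E := by
  obtain h | ⟨m, -, l, hl⟩ := (hT.2.2.2.2 n hn).cases_tail
  · exact absurd h.symm (Ne.symm hroot)
  · exact ⟨m, l, hl⟩

-- A loop at `m` makes `m` its own only parent, so no node reachable from the root is `m`.
lemma src_ne_tgt (hT : IsDT T) (h : (m, l, n) ∈ T.E) : m ≠ n := by
  rintro rfl
  suffices ∀ x, Relation.ReflTransGen (estep ↑T.E) T.root x → x ≠ m from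
    this m (hT.2.2.2.2 m (hT.src_mem h)) rfl
  intro x hx
  induction hx with
  | refl => exact (hT.tgt_ne_root h).symm
  | @tail b c _ hbc ih =>
    rintro rfl
    obtain ⟨l', hl'⟩ := hbc
    exact ih (congrArg Prod.fst (hT.eq_of_tgt_eq hl' h rfl))

lemma insertEdge (hT : IsDT T) (hm : m ∈ T.N) (hn : n ∉ T.N) :
    IsDT (T.insertEdge m l n) := by
  obtain ⟨hroot, hends, huniq, hnr, hreach⟩ := hT
  have hne : ∀ e ∈ T.E, e.2.2 ≠ n := fun e he h => hn (h ▸ (hends e he).2)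
  refine ⟨Finset.mem_insert_of_mem hroot, ?_, ?_, ?_, ?_⟩
  · intro e he
    rcases Finset.mem_insert.1 he with rfl | he
    · exact ⟨Finset.mem_insert_of_mem hm, Finset.mem_insert_self _ _⟩
    · exact ⟨Finset.mem_insert_of_mem (hends e he).1, Finset.mem_insert_of_mem (hends e he).2⟩
  · simp only [Tree3.insertEdge, Finset.forall_mem_insert, forall_const, true_and]
    exact ⟨fun e he h => (hne e he h.symm).elim,
      fun e he => ⟨fun h => (hne e he h).elim, huniq e he⟩⟩
  · simp only [Tree3.insertEdge, Finset.forall_mem_insert]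
    exact ⟨fun h => hn (h ▸ hroot), hnr⟩
  · have mono : ∀ x, Relation.ReflTransGen (estep ↑T.E) T.root x →
        Relation.ReflTransGen (estep ↑(insert (m, l, n) T.E)) T.root x :=
      fun x => Relation.ReflTransGen.mono
        (fun _ _ ⟨l', hl'⟩ => ⟨l', Finset.mem_insert_of_mem hl'⟩) _ _
    simp only [Tree3.insertEdge, Finset.forall_mem_insert]
    exact ⟨(mono m (hreach m hm)).tail ⟨l, Finset.mem_insert_self _ _⟩,
      fun x hx => mono x (hreach x hx)⟩

lemma eraseEdge (hT : IsDT T) (he : (m, l, n) ∈ T.E) (hleaf : ∀ l' p, (n, l', p) ∉ T.E) :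
    IsDT (T.eraseEdge m l n) := by
  obtain ⟨hroot, hends, huniq, hnr, hreach⟩ := hT
  have hsrc : ∀ e ∈ T.E, e.1 ≠ n := fun e he' h => hleaf e.2.1 e.2.2 (h ▸ he')
  have htgt : ∀ e ∈ T.E, e ≠ (m, l, n) → e.2.2 ≠ n :=
    fun e he' hne h => hne (huniq e he' _ he h)
  refine ⟨Finset.mem_erase.2 ⟨(hnr _ he).symm, hroot⟩, ?_, ?_, ?_, ?_⟩
  · intro e he'
    obtain ⟨hne, he'⟩ := Finset.mem_erase.1 he'
    exact ⟨Finset.mem_erase.2 ⟨hsrc e he', (hends e he').1⟩,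
      Finset.mem_erase.2 ⟨htgt e he' hne, (hends e he').2⟩⟩
  · exact fun e he' e' he'' =>
      huniq e (Finset.mem_of_mem_erase he') e' (Finset.mem_of_mem_erase he'')
  · exact fun e he' => hnr e (Finset.mem_of_mem_erase he')
  · intro x hx
    obtain ⟨hxn, hx⟩ := Finset.mem_erase.1 hx
    suffices ∀ y, Relation.ReflTransGen (estep ↑T.E) T.root y → y ≠ n →
        Relation.ReflTransGen (estep ↑(T.E.erase (m, l, n))) T.root y from
      this x (hreach x hx) hxn
    intro y hy
    induction hy with
    | refl => exact fun _ => .refl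
    | @tail b c _ hbc ih =>
      intro hcn
      obtain ⟨l', hl'⟩ := hbc
      refine (ih (hsrc _ hl')).tail ⟨l', Finset.mem_erase.2 ⟨fun h => hcn ?_, hl'⟩⟩
      exact congrArg (fun e : Edge => e.2.2) h

end IsDT

lemma applyOp_add_eq_some_iff {T U : Tree3} {m l n : Node} (hT : IsDT T) :
    applyOp (Op.add m l n) T = some U ↔ m ∈ T.N ∧ n ∉ T.N ∧ U = T.insertEdge m l n := by
  rw [applyOp_add]
  constructor
  · intro h
    split_ifs at h with hc
    obtain ⟨hnotE, hT'⟩ := not_or.1 hc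
    have hT' : IsDT (T.insertEdge m l n) := not_not.1 hT'
    have hmem : (m, l, n) ∈ (T.insertEdge m l n).E := Finset.mem_insert_self _ _
    have hn : n ∉ T.N := by
      intro hn
      obtain ⟨m', l', h'⟩ := hT.exists_parent hn (hT'.tgt_ne_root hmem)
      exact hnotE (hT'.eq_of_tgt_eq (Finset.mem_insert_of_mem h') hmem rfl ▸ h')
    have hm := hT'.src_mem hmem
    simp only [Tree3.insertEdge, Finset.mem_insert, hT'.src_ne_tgt hmem, false_or] at hm
    exact ⟨hm, hn, (Option.some.inj h).symm⟩
  · rintro ⟨hm, hn, rfl⟩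
    rw [if_neg (not_or.2 ⟨fun h => hn (hT.tgt_mem h), not_not.2 (hT.insertEdge hm hn)⟩)]

lemma applyOp_del_eq_some_iff {T U : Tree3} {m l n : Node} (hT : IsDT T) :
    applyOp (Op.del m l n) T = some U ↔
      (m, l, n) ∈ T.E ∧ (∀ l' p, (n, l', p) ∉ T.E) ∧ U = T.eraseEdge m l n := by
  rw [applyOp_del]
  constructor
  · intro h
    split_ifs at h with hc
    obtain ⟨he, hT'⟩ := not_or.1 hc
    have he : (m, l, n) ∈ T.E := not_not.1 he
    have hT' : IsDT (T.eraseEdge m l n) := not_not.1 hT'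
    refine ⟨he, fun l' p hp => ?_, (Option.some.inj h).symm⟩
    have hp' : (n, l', p) ∈ (T.eraseEdge m l n).E :=
      Finset.mem_erase.2 ⟨fun h => hT.src_ne_tgt he (congrArg Prod.fst h).symm, hp⟩
    exact (Finset.mem_erase.1 (hT'.src_mem hp')).1 rfl
  · rintro ⟨he, hleaf, rfl⟩
    rw [if_neg (not_or.2 ⟨not_not.2 he, not_not.2 (hT.eraseEdge he hleaf)⟩)]

lemma IsDT.of_applyOp {o : Op} {T U : Tree3} (h : applyOp o T = some U) : IsDT U := by
  cases o <;> simp only [applyOp_add, applyOp_del] at h <;> split_ifs at h with hc <;>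
    exact Option.some.inj h ▸ not_not.1 (not_or.1 hc).2

def Op.Touches (o : Op) (x : Node) : Prop := o.src = x ∨ o.tgt = x

section FirstOccurrence

variable {a : QLAction} {S : QLSchedule} {o : Op} {t : ℕ} {x m l n : Node} {e : Edge}

lemma firstNodeOp_cons :
    firstNodeOp (a :: S) x = if a.1.Touches x then some a.1 else firstNodeOp S x := by
  simp only [firstNodeOp, ops, List.map_cons, List.find?_cons]
  split <;> simp_all [Op.Touches]

lemma firstEdgeOp_cons :
    firstEdgeOp (a :: S) e = if a.1.edge = e then some a.1 else firstEdgeOp S e := by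
  simp only [firstEdgeOp, ops, List.map_cons, List.find?_cons]
  split <;> simp_all

lemma occursTgt_cons : occursTgt (a :: S) x ↔ a.1.tgt = x ∨ occursTgt S x := by
  simp [occursTgt, ops]

lemma mem_NminI_cons_iff (h : ¬o.Touches x) :
    x ∈ NminI ((o, t) :: S) ↔ x ∈ NminI S := by
  simp only [NminI, Set.mem_union, Set.mem_ofPred_eq, firstNodeOp_cons, if_neg h]

lemma mem_NmaxI_cons_iff (h : ¬o.Touches x) :
    x ∈ NmaxI ((o, t) :: S) ↔ x ∈ NmaxI S := by
  simp only [NmaxI, Set.mem_ofPred_eq, firstNodeOp_cons, if_neg h]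

lemma mem_EminI_cons_iff (h : o.edge ≠ e) : e ∈ EminI ((o, t) :: S) ↔ e ∈ EminI S := by
  simp only [EminI, Set.mem_ofPred_eq, firstEdgeOp_cons, if_neg h]

lemma mem_EmaxI_cons_iff (h : o.edge ≠ e) (h₁ : o.tgt ≠ e.1) (h₂ : o.tgt ≠ e.2.2) :
    e ∈ EmaxI ((o, t) :: S) ↔ e ∈ EmaxI S := by
  simp only [EmaxI, Set.mem_union, mem_EminI_cons_iff h, Set.mem_ofPred_eq, occursTgt_cons,
    h₁, h₂, false_or]

lemma mem_NminI_add_cons (h : (Op.add m l n).Touches x) :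
    x ∈ NminI ((Op.add m l n, t) :: S) ↔ x = m := by
  have hx : firstNodeOp ((Op.add m l n, t) :: S) x = some (Op.add m l n) := by
    rw [firstNodeOp_cons]; exact if_pos h
  simp only [NminI, Set.mem_union, Set.mem_ofPred_eq, hx]
  aesop

lemma mem_NmaxI_add_cons (h : (Op.add m l n).Touches x) :
    x ∈ NmaxI ((Op.add m l n, t) :: S) ↔ x ≠ n := by
  have hx : firstNodeOp ((Op.add m l n, t) :: S) x = some (Op.add m l n) := by
    rw [firstNodeOp_cons]; exact if_pos h
  simp only [NmaxI, Set.mem_ofPred_eq, hx]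
  aesop

lemma mem_NmaxI_del_cons (h : (Op.del m l n).Touches x) : x ∈ NmaxI ((Op.del m l n, t) :: S) := by
  have hx : firstNodeOp ((Op.del m l n, t) :: S) x = some (Op.del m l n) := by
    rw [firstNodeOp_cons]; exact if_pos h
  simp [NmaxI, hx]

lemma notMem_EminI_add_cons : (m, l, n) ∉ EminI ((Op.add m l n, t) :: S) := by
  simp [EminI, firstEdgeOp_cons, Op.edge]

lemma mem_EminI_del_cons : (m, l, n) ∈ EminI ((Op.del m l n, t) :: S) := by
  simp [EminI, firstEdgeOp_cons, Op.edge]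

end FirstOccurrence

section Step

variable {S : QLSchedule} {T : Tree3} {t : ℕ} {m l n : Node}

lemma basicInput_add_cons (hT : IsDT T) (hm : m ∈ T.N) (hn : n ∉ T.N)
    (hB : BasicInput S (T.insertEdge m l n)) : BasicInput ((Op.add m l n, t) :: S) T := by
  obtain ⟨-, hmin, hmax, hemin, hemax⟩ := hB
  refine ⟨hT, fun x hx => ?_, fun x hx => ?_, fun f hf => ?_, fun f hf => ?_⟩
  · by_cases hx' : (Op.add m l n).Touches x
    · exact (mem_NminI_add_cons hx').1 hx ▸ hm
    · exact ((Finset.mem_insert.1 (hmin ((mem_NminI_cons_iff hx').1 hx))).resolve_left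
        fun h => hx' (Or.inr h.symm))
  · by_cases hx' : (Op.add m l n).Touches x
    · exact (mem_NmaxI_add_cons hx').2 fun h => hn (h ▸ hx)
    · exact (mem_NmaxI_cons_iff hx').2 (hmax (Finset.mem_insert_of_mem hx))
  · by_cases hf' : (Op.add m l n).edge = f
    · exact absurd (hf' ▸ hf) notMem_EminI_add_cons
    · exact (Finset.mem_insert.1 (hemin ((mem_EminI_cons_iff hf').1 hf))).resolve_left
        (Ne.symm hf')
  · have hf' : (Op.add m l n).edge ≠ f := fun h => hn (hT.tgt_mem (h ▸ hf))
    rw [mem_EmaxI_cons_iff hf' (fun h : n = f.1 => hn (h ▸ hT.src_mem hf))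
      (fun h : n = f.2.2 => hn (h ▸ hT.tgt_mem hf))]
    exact hemax (Finset.mem_insert_of_mem hf)

lemma basicInput_del_cons (hT : IsDT T) (he : (m, l, n) ∈ T.E)
    (hT' : IsDT (T.eraseEdge m l n)) (hB : BasicInput S (T.eraseEdge m l n)) :
    BasicInput ((Op.del m l n, t) :: S) T := by
  obtain ⟨-, hmin, hmax, hemin, hemax⟩ := hB
  refine ⟨hT, fun x hx => ?_, fun x hx => ?_, fun f hf => ?_, fun f hf => ?_⟩
  · by_cases hx' : (Op.del m l n).Touches x
    · rcases hx' with rfl | rfl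
      exacts [hT.src_mem he, hT.tgt_mem he]
    · exact Finset.mem_of_mem_erase (hmin ((mem_NminI_cons_iff hx').1 hx))
  · by_cases hx' : (Op.del m l n).Touches x
    · exact mem_NmaxI_del_cons hx'
    · exact (mem_NmaxI_cons_iff hx').2
        (hmax (Finset.mem_erase.2 ⟨fun h => hx' (Or.inr h.symm), hx⟩))
  · by_cases hf' : (Op.del m l n).edge = f
    · exact hf' ▸ he
    · exact Finset.mem_of_mem_erase (hemin ((mem_EminI_cons_iff hf').1 hf))
  · by_cases hf' : (Op.del m l n).edge = f
    · exact hf' ▸ Or.inl mem_EminI_del_cons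
    · have hf₁ : f ∈ (T.eraseEdge m l n).E := Finset.mem_erase.2 ⟨Ne.symm hf', hf⟩
      rw [mem_EmaxI_cons_iff hf' (Finset.ne_of_mem_erase (hT'.src_mem hf₁)).symm
        (Finset.ne_of_mem_erase (hT'.tgt_mem hf₁)).symm]
      exact hemax hf₁

lemma exists_applyOp_add_basicInput (hB : BasicInput ((Op.add m l n, t) :: S) T)
    (hm : m ∈ NmaxI S) (hn : n ∈ NmaxI S) (he : (m, l, n) ∈ EmaxI S) :
    ∃ T', applyOp (Op.add m l n) T = some T' ∧ BasicInput S T' := by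
  obtain ⟨hT, hmin, hmax, hemin, hemax⟩ := hB
  have hmT : m ∈ T.N := hmin ((mem_NminI_add_cons (Or.inl rfl)).2 rfl)
  have hnT : n ∉ T.N := fun h => (mem_NmaxI_add_cons (Or.inr rfl)).1 (hmax h) rfl
  refine ⟨_, (applyOp_add_eq_some_iff hT).2 ⟨hmT, hnT, rfl⟩, hT.insertEdge hmT hnT,
    fun x hx => ?_, fun x hx => ?_, fun f hf => ?_, fun f hf => ?_⟩
  · by_cases hx' : (Op.add m l n).Touches x
    · rcases hx' with rfl | rfl
      exacts [Finset.mem_insert_of_mem hmT, Finset.mem_insert_self _ _]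
    · exact Finset.mem_insert_of_mem (hmin ((mem_NminI_cons_iff hx').2 hx))
  · by_cases hx' : (Op.add m l n).Touches x
    · rcases hx' with rfl | rfl
      exacts [hm, hn]
    · refine (mem_NmaxI_cons_iff hx').1 (hmax ?_)
      exact (Finset.mem_insert.1 hx).resolve_left fun h => hx' (Or.inr h.symm)
  · by_cases hf' : (Op.add m l n).edge = f
    · exact hf' ▸ Finset.mem_insert_self _ _
    · exact Finset.mem_insert_of_mem (hemin ((mem_EminI_cons_iff hf').2 hf))
  · by_cases hf' : (Op.add m l n).edge = f
    · exact hf' ▸ he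
    · have hf : f ∈ T.E := (Finset.mem_insert.1 hf).resolve_left (Ne.symm hf')
      exact (mem_EmaxI_cons_iff hf' (fun h : n = f.1 => hnT (h ▸ hT.src_mem hf))
        (fun h : n = f.2.2 => hnT (h ▸ hT.tgt_mem hf))).1 (hemax hf)

lemma exists_applyOp_del_basicInput (hB : BasicInput ((Op.del m l n, t) :: S) T)
    (hm : m ∈ NmaxI S) (hn : n ∉ NminI S) (he : (m, l, n) ∉ EminI S)
    (hleaf : ∀ l' p, (n, l', p) ∉ EminI S) :
    ∃ T', applyOp (Op.del m l n) T = some T' ∧ BasicInput S T' := by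
  obtain ⟨hT, hmin, hmax, hemin, hemax⟩ := hB
  have heT : (m, l, n) ∈ T.E := hemin mem_EminI_del_cons
  have hmn : m ≠ n := hT.src_ne_tgt heT
  -- `n` is a target in the schedule, so by `E^max_I` an edge out of `n` in `T` is in `E^min_I`.
  have hleafT : ∀ l' p, (n, l', p) ∉ T.E := by
    intro l' p hp
    rcases hemax hp with hp | ⟨hn, -⟩
    · have hne : (Op.del m l n).edge ≠ (n, l', p) := fun h => hmn (congrArg Prod.fst h)
      exact hleaf l' p ((mem_EminI_cons_iff hne).1 hp)
    · exact hn (occursTgt_cons.2 (Or.inl rfl))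
  have hT' := hT.eraseEdge heT hleafT
  refine ⟨_, (applyOp_del_eq_some_iff hT).2 ⟨heT, hleafT, rfl⟩, hT',
    fun x hx => ?_, fun x hx => ?_, fun f hf => ?_, fun f hf => ?_⟩
  · have hxn : x ≠ n := fun h => hn (h ▸ hx)
    by_cases hx' : (Op.del m l n).Touches x
    · obtain rfl : m = x := hx'.resolve_right (Ne.symm hxn)
      exact Finset.mem_erase.2 ⟨hmn, hT.src_mem heT⟩
    · exact Finset.mem_erase.2 ⟨hxn, hmin ((mem_NminI_cons_iff hx').2 hx)⟩
  · obtain ⟨hxn, hx⟩ := Finset.mem_erase.1 hx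
    by_cases hx' : (Op.del m l n).Touches x
    · obtain rfl : m = x := hx'.resolve_right (Ne.symm hxn)
      exact hm
    · exact (mem_NmaxI_cons_iff hx').1 (hmax hx)
  · have hf' : (Op.del m l n).edge ≠ f := fun h => he (by rwa [← h] at hf)
    exact Finset.mem_erase.2 ⟨Ne.symm hf', hemin ((mem_EminI_cons_iff hf').2 hf)⟩
  · obtain ⟨hf', hfT⟩ := Finset.mem_erase.1 hf
    exact (mem_EmaxI_cons_iff (o := .del m l n) (Ne.symm hf')
      (Finset.ne_of_mem_erase (hT'.src_mem hf)).symm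
      (Finset.ne_of_mem_erase (hT'.tgt_mem hf)).symm).1 (hemax hfT)

end Step

lemma basicInput_cons_of_applyOp {a : QLAction} {S : QLSchedule} {T T' : Tree3} (hT : IsDT T)
    (ha : applyOp a.1 T = some T') (hB : BasicInput S T') : BasicInput (a :: S) T := by
  obtain ⟨⟨m, l, n⟩ | ⟨m, l, n⟩, t⟩ := a
  · obtain ⟨hm, hn, rfl⟩ := (applyOp_add_eq_some_iff hT).1 ha
    exact basicInput_add_cons hT hm hn hB
  · obtain ⟨he, -, rfl⟩ := (applyOp_del_eq_some_iff hT).1 ha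
    exact basicInput_del_cons hT he hB.1 hB

lemma basicInput_nil {T : Tree3} (hT : IsDT T) : BasicInput [] T := by
  simp [BasicInput, NminI, NmaxI, EminI, EmaxI, firstNodeOp, firstEdgeOp, occursTgt, ops, hT]

lemma basicInput_of_applyQL_eq_some {S : QLSchedule} {T U : Tree3} (hT : IsDT T)
    (h : applyQL S T = some U) : BasicInput S T := by
  induction S generalizing T with
  | nil => exact basicInput_nil hT
  | cons a S ih =>
    obtain ⟨T₁, h₁, hS⟩ := Option.bind_eq_some_iff.1 h
    exact basicInput_cons_of_applyOp hT h₁ (ih (IsDT.of_applyOp h₁) hS)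

lemma exists_applyOp_basicInput {a : QLAction} {S : QLSchedule} {T T₀ T₁ : Tree3}
    (hB : BasicInput (a :: S) T) (h₀ : IsDT T₀) (h₁ : applyOp a.1 T₀ = some T₁)
    (hB₁ : BasicInput S T₁) : ∃ T', applyOp a.1 T = some T' ∧ BasicInput S T' := by
  obtain ⟨hT₁, hmin₁, hmax₁, hemin₁, hemax₁⟩ := hB₁
  obtain ⟨⟨m, l, n⟩ | ⟨m, l, n⟩, t⟩ := a
  · obtain ⟨hm₀, -, rfl⟩ := (applyOp_add_eq_some_iff h₀).1 h₁
    exact exists_applyOp_add_basicInput hB (hmax₁ (Finset.mem_insert_of_mem hm₀))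
      (hmax₁ (Finset.mem_insert_self _ _)) (hemax₁ (Finset.mem_insert_self _ _))
  · obtain ⟨he₀, -, rfl⟩ := (applyOp_del_eq_some_iff h₀).1 h₁
    exact exists_applyOp_del_basicInput hB
      (hmax₁ (Finset.mem_erase.2 ⟨h₀.src_ne_tgt he₀, h₀.src_mem he₀⟩))
      (fun h => Finset.ne_of_mem_erase (hmin₁ h) rfl)
      (fun h => Finset.ne_of_mem_erase (hemin₁ h) rfl)
      (fun l' p h => Finset.ne_of_mem_erase (hT₁.src_mem (hemin₁ h)) rfl)

lemma exists_applyQL_eq_some {S : QLSchedule} {T : Tree3} (hS : ConsistentQL S)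
    (hT : BasicInput S T) : ∃ U, applyQL S T = some U := by
  induction S generalizing T with
  | nil => exact ⟨T, rfl⟩
  | cons a S ih =>
    obtain ⟨T₀, h₀, hdef⟩ := hS
    obtain ⟨U₀, hU₀⟩ := Option.isSome_iff_exists.1 hdef
    obtain ⟨T₁, h₁, hS₁⟩ := Option.bind_eq_some_iff.1 hU₀
    have hB₁ := basicInput_of_applyQL_eq_some (IsDT.of_applyOp h₁) hS₁
    obtain ⟨T', hT', hB'⟩ := exists_applyOp_basicInput hT h₀ h₁ hB₁
    obtain ⟨U, hU⟩ := ih ⟨T₁, hB₁.1, by rw [hS₁]; rfl⟩ hB'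
    exact ⟨U, Option.bind_eq_some_iff.2 ⟨T', hT', hU⟩⟩

lemma applyQL_append (S S' : QLSchedule) (T : Tree3) :
    applyQL (S ++ S') T = (applyQL S T).bind (applyQL S') := by
  induction S generalizing T with
  | nil => rfl
  | cons a S ih => simp only [List.cons_append, applyQL, ih, Option.bind_assoc]

lemma applyQL_singleton (a : QLAction) (T : Tree3) : applyQL [a] T = applyOp a.1 T := by
  simp [applyQL]

lemma IsDT.of_applyQL {S : QLSchedule} {T U : Tree3} (hT : IsDT T)
    (h : applyQL S T = some U) : IsDT U := by
  induction S generalizing T with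
  | nil => exact Option.some.inj h ▸ hT
  | cons a S ih =>
    obtain ⟨T₁, h₁, hS⟩ := Option.bind_eq_some_iff.1 h
    exact ih (IsDT.of_applyOp h₁) hS

lemma lastEdgeOp_append_singleton (S : QLSchedule) (a : QLAction) (e : Edge) :
    lastEdgeOp (S ++ [a]) e = if a.1.edge = e then some a.1 else lastEdgeOp S e := by
  simp only [lastEdgeOp, ops, List.map_append, List.map_singleton, List.reverse_append,
    List.reverse_singleton, List.singleton_append, List.find?_cons]
  split <;> simp_all

lemma E_of_applyOp_add {T U : Tree3} {m l n : Node} (h : applyOp (.add m l n) T = some U) :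
    U.E = insert (m, l, n) T.E := by
  rw [applyOp_add] at h
  split_ifs at h
  cases h
  rfl

lemma E_of_applyOp_del {T U : Tree3} {m l n : Node} (h : applyOp (.del m l n) T = some U) :
    U.E = T.E.erase (m, l, n) := by
  rw [applyOp_del] at h
  split_ifs at h
  cases h
  rfl

lemma coe_E_applyQL {S : QLSchedule} {T U : Tree3} (h : applyQL S T = some U) :
    (↑U.E : Set Edge) = ((↑T.E : Set Edge) ∪ ADDs S) \ DELs S := by
  induction S using List.reverseRecOn generalizing U with
  | nil =>
    cases h
    ext
    simp [ADDs, DELs, lastEdgeOp, ops]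
  | append_singleton S a ih =>
    rw [applyQL_append] at h
    obtain ⟨U₀, h₀, h₁⟩ := Option.bind_eq_some_iff.1 h
    rw [applyQL_singleton] at h₁
    obtain ⟨o, t⟩ := a
    ext f
    by_cases hf : o.edge = f
    · subst hf
      have hlast : lastEdgeOp (S ++ [(o, t)]) o.edge = some o := by
        rw [lastEdgeOp_append_singleton, if_pos rfl]
      cases o with
      | add m l n =>
        simp only [Op.edge] at hlast
        simp [E_of_applyOp_add h₁, ADDs, DELs, hlast, Op.edge]
      | del m l n =>
        simp only [Op.edge] at hlast
        simp [E_of_applyOp_del h₁, ADDs, DELs, hlast, Op.edge]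
    · have hU : f ∈ U.E ↔ f ∈ U₀.E := by
        cases o with
        | add m l n => simp [E_of_applyOp_add h₁, show f ≠ (m, l, n) from Ne.symm hf]
        | del m l n => simp [E_of_applyOp_del h₁, show f ≠ (m, l, n) from Ne.symm hf]
      have hlast : lastEdgeOp (S ++ [(o, t)]) f = lastEdgeOp S f := by
        rw [lastEdgeOp_append_singleton, if_neg hf]
      rw [Finset.mem_coe, hU, ← Finset.mem_coe, ih h₀]
      simp only [ADDs, DELs, Set.mem_sdiff, Set.mem_union, Set.mem_ofPred_eq, hlast]

def Op.inv : Op → Op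
  | .add m l n => .del m l n
  | .del m l n => .add m l n

@[simp] lemma Op.src_inv (o : Op) : o.inv.src = o.src := by cases o <;> rfl
@[simp] lemma Op.tgt_inv (o : Op) : o.inv.tgt = o.tgt := by cases o <;> rfl
@[simp] lemma Op.edge_inv (o : Op) : o.inv.edge = o.edge := by cases o <;> rfl
@[simp] lemma Op.inv_eq_add_iff {o : Op} {m l n : Node} :
    o.inv = .add m l n ↔ o = .del m l n := by
  cases o <;> simp [Op.inv]
@[simp] lemma Op.inv_eq_del_iff {o : Op} {m l n : Node} :
    o.inv = .del m l n ↔ o = .add m l n := by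
  cases o <;> simp [Op.inv]

def invSchedule (S : QLSchedule) : QLSchedule := (S.map fun a => (a.1.inv, a.2)).reverse

section Inverse

variable {S : QLSchedule} {x : Node} {e : Edge}

lemma ops_invSchedule : ops (invSchedule S) = ((ops S).map Op.inv).reverse := by
  simp [invSchedule, ops]

lemma firstNodeOp_invSchedule : firstNodeOp (invSchedule S) x = (lastNodeOp S x).map Op.inv := by
  simp [firstNodeOp, lastNodeOp, ops_invSchedule, ← List.map_reverse, List.find?_map]

lemma firstEdgeOp_invSchedule : firstEdgeOp (invSchedule S) e = (lastEdgeOp S e).map Op.inv := by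
  simp [firstEdgeOp, lastEdgeOp, ops_invSchedule, ← List.map_reverse, List.find?_map]

lemma occursTgt_invSchedule : occursTgt (invSchedule S) x ↔ occursTgt S x := by
  simp [occursTgt, ops_invSchedule]

lemma basicInput_invSchedule_iff {U : Tree3} :
    BasicInput (invSchedule S) U ↔ BasicOutput S U := by
  have hNmin : NminI (invSchedule S) = NminO S := by
    ext x; simp [NminI, NminO, firstNodeOp_invSchedule, or_comm]
  have hNmax : NmaxI (invSchedule S) = NmaxO S := by
    ext x; simp [NmaxI, NmaxO, firstNodeOp_invSchedule]
  have hEmin : EminI (invSchedule S) = EminO S := by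
    ext e; simp [EminI, EminO, firstEdgeOp_invSchedule]
  have hEmax : EmaxI (invSchedule S) = EmaxO S := by
    simp only [EmaxI, EmaxO, hEmin, occursTgt_invSchedule]
  rw [BasicInput, BasicOutput, hNmin, hNmax, hEmin, hEmax]

end Inverse

lemma applyOp_inv {o : Op} {T U : Tree3} (hT : IsDT T) (h : applyOp o T = some U) :
    applyOp o.inv U = some T := by
  have hU := IsDT.of_applyOp h
  obtain ⟨N, E, r⟩ := T
  cases o with
  | add m l n =>
    obtain ⟨hm, hn, rfl⟩ := (applyOp_add_eq_some_iff hT).1 h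
    have he : (m, l, n) ∉ E := fun h => hn (hT.tgt_mem h)
    refine (applyOp_del_eq_some_iff hU).2 ⟨Finset.mem_insert_self _ _, fun l' p hp => ?_, ?_⟩
    · rcases Finset.mem_insert.1 hp with h | h
      · obtain rfl : n = m := congrArg Prod.fst h
        exact hn hm
      · exact hn (hT.src_mem h)
    · simp [Tree3.eraseEdge, Tree3.insertEdge, Finset.erase_insert hn, Finset.erase_insert he]
  | del m l n =>
    obtain ⟨he, -, rfl⟩ := (applyOp_del_eq_some_iff hT).1 h
    refine (applyOp_add_eq_some_iff hU).2
      ⟨Finset.mem_erase.2 ⟨hT.src_ne_tgt he, hT.src_mem he⟩,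
        fun h => Finset.ne_of_mem_erase h rfl, ?_⟩
    simp [Tree3.eraseEdge, Tree3.insertEdge, Finset.insert_erase (hT.tgt_mem he),
      Finset.insert_erase he]

lemma applyQL_invSchedule {S : QLSchedule} {T U : Tree3} (hT : IsDT T)
    (h : applyQL S T = some U) : applyQL (invSchedule S) U = some T := by
  induction S generalizing T with
  | nil => exact (Option.some.inj h) ▸ rfl
  | cons a S ih =>
    obtain ⟨T₁, h₁, hS⟩ := Option.bind_eq_some_iff.1 h
    have hinv : invSchedule (a :: S) = invSchedule S ++ [(a.1.inv, a.2)] := by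
      simp [invSchedule]
    rw [hinv, applyQL_append, ih (IsDT.of_applyOp h₁) hS, Option.bind_some, applyQL_singleton]
    exact applyOp_inv hT h₁

lemma basicOutput_of_applyQL_eq_some {S : QLSchedule} {T U : Tree3} (hT : IsDT T)
    (h : applyQL S T = some U) : BasicOutput S U :=
  basicInput_invSchedule_iff.1
    (basicInput_of_applyQL_eq_some (hT.of_applyQL h) (applyQL_invSchedule hT h))

/-- If `S` is a consistent QL schedule and `T` a basic input tree of `S`,
then `S[T]` is defined, its edge set is `(E(T) ∪ ADD(S)) − DEL(S)`, and it is a basic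
output tree of `S`. -/
theorem apply_on_basic_input (S : QLSchedule) (T : Tree3)
    (hS : ConsistentQL S) (hT : BasicInput S T) :
    ∃ U : Tree3, applyQL S T = some U ∧
      (↑U.E : Set Edge) = ((↑T.E : Set Edge) ∪ ADDs S) \ DELs S ∧
      BasicOutput S U := by
  obtain ⟨U, hU⟩ := exists_applyQL_eq_some hS hT
  exact ⟨U, hU, coe_E_applyQL hU, basicOutput_of_applyQL_eq_some hT.1 hU⟩
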